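/- Let G = (V, E) be a cubic graph and let (X, Y) be the corresponding instance of MLA. For every edge {v_i, v_j} ∈ E and every feasible labeling of (X, Y), the total cost of the operations labeling the four unmatched characters of the block B_X-VE(e_{i,j}) is at least 2. -/

import Mathlib

namespace MLA

/-! ### Generic labelings of aligned genomes -/

/-- An operation labeling a substring of the genome `X`: the substring of length
`len` starting at position `start`; `src = none` means a loss, `src = some s`
means a duplication coming from the identical occurrence starting at `s`. -/
structure Op where
  start : ℕ
  len : ℕ
  src : Option ℕ
deriving DecidableEq

/-- Cost of an operation: a duplication costs `1`, a loss of length `z` costs `z`. -/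
def Op.cost (o : Op) : ℕ := if o.src = none then o.len else 1

/-- The positions covered by (the target substring of) an operation. -/
def Op.covers (o : Op) (p : ℕ) : Prop := o.start ≤ p ∧ p < o.start + o.len

instance (o : Op) (p : ℕ) : Decidable (o.covers p) := by
  unfold Op.covers; infer_instance

/-- Validity of an operation with respect to the genome `X`: nonempty target
inside `X`, and a duplication comes from a different occurrence in `X` of a
string identical to its target substring. -/
def Op.valid {α : Type*} (X : List α) (o : Op) : Prop :=
  1 ≤ o.len ∧ o.start + o.len ≤ X.length ∧
    ∀ s, o.src = some s → s ≠ o.start ∧ s + o.len ≤ X.length ∧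
      ∀ t < o.len, X[s + t]? = X[o.start + t]?

/-- A duplication from occurrence `s` to occurrence `t` is maximal if the
characters immediately to the left of `s` and `t` differ (or one does not
exist) and likewise on the right. -/
def Op.maximalDup {α : Type*} (X : List α) (o : Op) : Prop :=
  ∃ s, o.src = some s ∧
    (s = 0 ∨ o.start = 0 ∨ X[s - 1]? ≠ X[o.start - 1]?) ∧
    (X[s + o.len]? = none ∨ X[o.start + o.len]? = none ∨
      X[s + o.len]? ≠ X[o.start + o.len]?)

/-- `L` is a labeling of the set `U` of unmatched positions of the genome `X`:
the target substrings of its operations are valid and partition `U`. -/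
structure IsLabeling {α : Type*} (X : List α) (U : ℕ → Prop) (L : Finset Op) :
    Prop where
  valid : ∀ o ∈ L, o.valid X
  unmatched : ∀ o ∈ L, ∀ p, o.covers p → U p
  covers : ∀ p, U p → ∃ o ∈ L, o.covers p
  disjoint : ∀ o ∈ L, ∀ o' ∈ L, ∀ p, o.covers p → o'.covers p → o = o'

/-- Arc of the duplication graph of a labeling: from the operation owning part
of the source occurrence of a duplication to the duplication itself. -/
def dupArc (L : Finset Op) (o o' : Op) : Prop :=
  o ∈ L ∧ o' ∈ L ∧ ∃ s, o'.src = some s ∧ ∃ p, o.covers p ∧ s ≤ p ∧ p < s + o'.len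

/-- A labeling is feasible if its duplication graph has no cycle. -/
def Feasible (L : Finset Op) : Prop := ∀ o, ¬ Relation.TransGen (dupArc L) o o

/-- Cost of a labeling. -/
def cost (L : Finset Op) : ℕ := ∑ o ∈ L, o.cost

/-- The operations of `L` labeling some position in `[lo, hi)`. -/
def restrict (L : Finset Op) (lo hi : ℕ) : Finset Op :=
  L.filter fun o => ∃ p ∈ Finset.Ico lo hi, o.covers p

/-- The total cost of the operations of `L` labeling positions in `[lo, hi)`. -/
def blockCost (L : Finset Op) (lo hi : ℕ) : ℕ := cost (restrict L lo hi)

/-! ### The reduction from Minimum Vertex Cover on cubic graphs -/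

/-- The alphabet of the reduction (all symbols are pairwise distinct). -/
inductive Sym (n : ℕ) : Type
  | s  (i : Fin n)
  | se (i j : Fin n)
  | x  (i : Fin n) (p : ℕ)
  | e  (i j : Fin n) (t : Fin 2)
  | z  (i : Fin n) (t : Fin 8)
  | w  (i : Fin n) (t : Fin 4)
  | u  (i : Fin n) (t : Fin 6)
deriving DecidableEq

variable {n : ℕ} (G : SimpleGraph (Fin n)) [DecidableRel G.Adj]

/-- The edges of `G` as pairs `(i, j)` with `i < j`, in lexicographic order. -/
def edgePairs : List (Fin n × Fin n) :=
  (List.finRange n).flatMap fun i =>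
    ((List.finRange n).filter fun j => decide (i < j ∧ G.Adj i j)).map fun j => (i, j)

/-- The edges incident to `i`, in edge order. -/
def incEdges (i : Fin n) : List (Fin n × Fin n) :=
  (edgePairs G).filter fun e => decide (e.1 = i ∨ e.2 = i)

/-- The `t`-th (`0`-based) edge incident to `i`. -/
def nthInc (i : Fin n) (t : ℕ) : Fin n × Fin n := (incEdges G i).getD t (i, i)

/-- The `0`-based index of edge `e` among the edges incident to `i`. -/
def edgeIdx (i : Fin n) (e : Fin n × Fin n) : ℕ := (incEdges G i).idxOf e

/-- Left part of the `i`-encoding of edge `e`. -/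
def encL (i : Fin n) (e : Fin n × Fin n) : List (Sym n) :=
  if i = e.1 then [.x i (edgeIdx G i e)] else [.e e.1 e.2 0, .e e.1 e.2 1]

/-- Right part of the `i`-encoding of edge `e`. -/
def encR (i : Fin n) (e : Fin n × Fin n) : List (Sym n) :=
  if i = e.1 then [.e e.1 e.2 0, .e e.1 e.2 1] else [.x i (edgeIdx G i e)]

/-- The `i`-encoding of edge `e`. -/
def enc (i : Fin n) (e : Fin n × Fin n) : List (Sym n) := encL G i e ++ encR G i e

/-- Block `B_{X-VE}(e)`. -/
def edgeBlockX (e : Fin n × Fin n) : List (Sym n) :=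
  [.se e.1 e.2, .x e.1 (edgeIdx G e.1 e), .e e.1 e.2 0, .e e.1 e.2 1,
   .x e.2 (edgeIdx G e.2 e)]

/-- Block `B_{X-VE}(v_i)`. -/
def vertexBlockX (i : Fin n) : List (Sym n) :=
  [.s i, .z i 0, .z i 1] ++ enc G i (nthInc G i 0) ++
  [.z i 2, .z i 3] ++ enc G i (nthInc G i 1) ++
  [.z i 4, .z i 5] ++ enc G i (nthInc G i 2) ++
  [.z i 6, .z i 7]

/-- Block `B_{X,A,1}(v_i) = B_{Y,A,1}(v_i)`. -/
def A1Block (i : Fin n) : List (Sym n) :=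
  [.w i 0, .z i 0, .z i 1, .w i 1, .z i 2, .z i 3,
   .w i 2, .z i 4, .z i 5, .w i 3, .z i 6, .z i 7]

/-- Block `B_{X,A,2}(v_i) = B_{Y,A,2}(v_i)`. -/
def A2Block (i : Fin n) : List (Sym n) :=
  [.u i 0, .z i 1] ++ encL G i (nthInc G i 0) ++ [.u i 1] ++ encR G i (nthInc G i 0) ++
  [.z i 2, .u i 2, .z i 3] ++ encL G i (nthInc G i 1) ++ [.u i 3] ++ encR G i (nthInc G i 1) ++
  [.z i 4, .u i 4, .z i 5] ++ encL G i (nthInc G i 2) ++ [.u i 5] ++ encR G i (nthInc G i 2) ++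
  [.z i 6]

/-- The genome `X` corresponding to the cubic graph `G`. -/
def genomeX : List (Sym n) :=
  ((List.finRange n).flatMap fun i => vertexBlockX G i) ++
  ((edgePairs G).flatMap fun e => edgeBlockX G e) ++
  ((List.finRange n).flatMap fun i => A1Block i ++ A2Block G i)

/-- The aligned genome `Y` (`none` denotes a gap). -/
def alignedY : List (Option (Sym n)) :=
  ((List.finRange n).flatMap fun i => some (.s i) :: List.replicate 17 none) ++
  ((edgePairs G).flatMap fun e => some (.se e.1 e.2) :: List.replicate 4 none) ++
  ((List.finRange n).flatMap fun i => (A1Block i ++ A2Block G i).map some)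

/-- The unmatched positions of `X` (those aligned with a gap of `Y`). -/
def UnmatchedX (p : ℕ) : Prop := (alignedY G)[p]? = some none

/-- Start position of `B_{X-VE}(v_i)` in `X`. -/
def vStart (i : Fin n) : ℕ := 18 * i.val

/-- Start position of `B_{X-VE}(e)` in `X`. -/
def eStart (e : Fin n × Fin n) : ℕ := 18 * n + 5 * (edgePairs G).idxOf e

/-- Start position of `B_{X,A,1}(v_i)` in `X` (`B_{X,A,2}(v_i)` starts 12 later). -/
def aStart (i : Fin n) : ℕ := 18 * n + 5 * (edgePairs G).length + 33 * i.val

/-- Offset of the `i`-encoding inside `B_{X-VE}(e)`. -/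
def encOff (i : Fin n) (e : Fin n × Fin n) : ℕ := if i = e.1 then 1 else 2

/-- The type-a labeling of `B_{X-VE}(v_i)`: four duplications coming from
`B_{X,A,1}(v_i)` (for the pairs of `z`-symbols) and three duplications coming
from the blocks of the three edges incident to `v_i` (for the encodings). -/
def typeA (i : Fin n) : Finset Op :=
  { ⟨vStart i + 1, 2, some (aStart G i + 1)⟩,
    ⟨vStart i + 6, 2, some (aStart G i + 4)⟩,
    ⟨vStart i + 11, 2, some (aStart G i + 7)⟩,
    ⟨vStart i + 16, 2, some (aStart G i + 10)⟩,
    ⟨vStart i + 3, 3, some (eStart G (nthInc G i 0) + encOff i (nthInc G i 0))⟩,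
    ⟨vStart i + 8, 3, some (eStart G (nthInc G i 1) + encOff i (nthInc G i 1))⟩,
    ⟨vStart i + 13, 3, some (eStart G (nthInc G i 2) + encOff i (nthInc G i 2))⟩ }

/-- The type-b labeling of `B_{X-VE}(v_i)`: six duplications coming from
`B_{X,A,2}(v_i)` and two losses of length one (for `z_{i,1}` and `z_{i,8}`). -/
def typeB (i : Fin n) : Finset Op :=
  let a := aStart G i + 12
  let l1 := (encL G i (nthInc G i 0)).length
  let l2 := (encL G i (nthInc G i 1)).length
  let l3 := (encL G i (nthInc G i 2)).length
  { ⟨vStart i + 1, 1, none⟩,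
    ⟨vStart i + 17, 1, none⟩,
    ⟨vStart i + 2, 1 + l1, some (a + 1)⟩,
    ⟨vStart i + 3 + l1, 4 - l1, some (a + 3 + l1)⟩,
    ⟨vStart i + 7, 1 + l2, some (a + 8)⟩,
    ⟨vStart i + 8 + l2, 4 - l2, some (a + 10 + l2)⟩,
    ⟨vStart i + 12, 1 + l3, some (a + 15)⟩,
    ⟨vStart i + 13 + l3, 4 - l3, some (a + 17 + l3)⟩ }

/-- The cost-2 labeling of `B_{X-VE}(e)` using a duplication coming from
`B_{X-VE}(v_i)` (where `i = e.1`) and a loss for the last character. -/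
def edgeLabA (e : Fin n × Fin n) : Finset Op :=
  { ⟨eStart G e + 1, 3, some (vStart e.1 + 3 + 5 * edgeIdx G e.1 e)⟩,
    ⟨eStart G e + 4, 1, none⟩ }

/-- The cost-2 labeling of `B_{X-VE}(e)` using a duplication coming from
`B_{X-VE}(v_j)` (where `j = e.2`) and a loss for the second character. -/
def edgeLabB (e : Fin n × Fin n) : Finset Op :=
  { ⟨eStart G e + 2, 3, some (vStart e.2 + 3 + 5 * edgeIdx G e.2 e)⟩,
    ⟨eStart G e + 1, 1, none⟩ }

/-- `C` is a vertex cover of `G`. -/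
def IsVC (C : Finset (Fin n)) : Prop := ∀ ⦃u v : Fin n⦄, G.Adj u v → u ∈ C ∨ v ∈ C

end MLA

/-!
The four unmatched characters `x_{i,p} e_{i,j,1} e_{i,j,2} x_{j,q}` of `B_X-VE(e_{i,j})` are
flanked by matched characters. So either at least two operations, each of cost at least one,
label them, or a single operation labels exactly these four characters. As a loss it costs 4; as
a duplication it needs a second occurrence of `x_{i,p} e_{i,j,1} e_{i,j,2} x_{j,q}` in `X`. There
is none: in the vertex blocks every encoding is flanked by `z`-symbols, so `e_{i,j,1}` has an
`x`-symbol right before it or two places after it but never both, and in the blocks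
`B_{X,A,2}` an `e`-symbol is never directly preceded by an `x`-symbol.
-/

namespace List

variable {α β : Type*} {f : β → List α} {k : ℕ}

theorem length_flatMap_of_length_eq {l : List β} (h : ∀ b ∈ l, (f b).length = k) :
    (l.flatMap f).length = k * l.length := by
  rw [length_flatMap, map_congr_left h, map_const', sum_replicate, smul_eq_mul, mul_comm]

theorem getElem?_flatMap_of_length_eq {l : List β} (h : ∀ b ∈ l, (f b).length = k)
    {a r : ℕ} (hr : r < k) :
    (l.flatMap f)[k * a + r]? = l[a]?.bind fun b => (f b)[r]? := by
  induction l generalizing a with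
  | nil => simp
  | cons b l ih =>
    have hb : (f b).length = k := h b mem_cons_self
    rw [flatMap_cons]
    cases a with
    | zero => simp [getElem?_append_left (hb ▸ hr : r < (f b).length)]
    | succ a =>
      rw [getElem?_append_right (by rw [hb]; nlinarith), hb,
        show k * (a + 1) + r - k = k * a + r by rw [mul_add]; omega,
        ih fun b hb => h b (mem_cons_of_mem _ hb)]
      simp

end List

theorem Nat.exists_eq_add_mul_add_of_lt {lo q k m : ℕ} (h₁ : lo ≤ q) (h₂ : q < lo + k * m) :
    ∃ a < m, ∃ r < k, q = lo + k * a + r := by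
  have hk : 0 < k := Nat.pos_of_ne_zero fun hk => by simp [hk] at h₂; omega
  refine ⟨(q - lo) / k, Nat.div_lt_of_lt_mul (by omega), (q - lo) % k, Nat.mod_lt _ hk, ?_⟩
  have := Nat.div_add_mod (q - lo) k
  omega

namespace MLA

theorem Op.one_le_cost {α : Type*} {X : List α} {o : Op} (h : o.valid X) : 1 ≤ o.cost := by
  unfold Op.cost
  split
  · exact h.1
  · rfl

theorem IsLabeling.two_le_blockCost_or_restrict_eq_singleton {α : Type*} {X : List α}
    {U : ℕ → Prop} {L : Finset Op} (hL : IsLabeling X U L) {lo hi : ℕ} (hlt : lo + 1 < hi)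
    (hlo : ¬ U lo) (hhi : ¬ U hi) (hU : ∀ p, lo < p → p < hi → U p) :
    2 ≤ blockCost L lo hi ∨
      ∃ o ∈ L, o.start = lo + 1 ∧ o.start + o.len = hi ∧ restrict L lo hi = {o} := by
  have mem_restrict :
      ∀ o ∈ L, ∀ p, lo < p → p < hi → o.covers p → o ∈ restrict L lo hi :=
    fun o ho p h₁ h₂ hp =>
      Finset.mem_filter.2 ⟨ho, p, Finset.mem_Ico.2 ⟨h₁.le, h₂⟩, hp⟩
  obtain ⟨o, hoL, hoc⟩ := hL.covers (lo + 1) (hU _ (by omega) hlt)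
  have hoR := mem_restrict o hoL _ (by omega) hlt hoc
  by_cases hsingle : ∀ o' ∈ restrict L lo hi, o' = o
  · right
    have hcov : ∀ p, lo < p → p < hi → o.covers p := fun p h₁ h₂ => by
      obtain ⟨o', ho'L, ho'c⟩ := hL.covers p (hU p h₁ h₂)
      rwa [← hsingle o' (mem_restrict o' ho'L p h₁ h₂ ho'c)]
    have hstart : o.start = lo + 1 := by
      by_contra hne
      exact hlo (hL.unmatched o hoL lo ⟨by grind [Op.covers], by grind [Op.covers]⟩)
    have hend : o.start + o.len = hi := by
      by_contra hne
      have := hcov (hi - 1) (by omega) (by omega)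
      exact hhi (hL.unmatched o hoL hi ⟨by grind [Op.covers], by grind [Op.covers]⟩)
    exact ⟨o, hoL, hstart, hend, Finset.eq_singleton_iff_unique_mem.2 ⟨hoR, hsingle⟩⟩
  · left
    push Not at hsingle
    obtain ⟨o', ho'R, hne⟩ := hsingle
    have hcost : ∀ o ∈ restrict L lo hi, 1 ≤ o.cost :=
      fun o ho => Op.one_le_cost (hL.valid o (Finset.mem_filter.1 ho).1)
    calc 2 ≤ o'.cost + o.cost := by grind
      _ = ∑ o ∈ {o', o}, o.cost := (Finset.sum_pair hne).symm
      _ ≤ blockCost L lo hi := Finset.sum_le_sum_of_subset (by grind)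

section Reduction

variable {n : ℕ} (G : SimpleGraph (Fin n)) [DecidableRel G.Adj]

theorem length_encL_add_length_encR (i : Fin n) (e : Fin n × Fin n) :
    (encL G i e).length + (encR G i e).length = 3 := by
  unfold encL encR
  split_ifs <;> rfl

theorem length_vertexBlockX (i : Fin n) : (vertexBlockX G i).length = 18 := by
  have := length_encL_add_length_encR G i
  simp only [vertexBlockX, enc, List.length_append, List.length_cons, List.length_nil]
  grind

theorem length_edgeBlockX (e : Fin n × Fin n) : (edgeBlockX G e).length = 5 := rfl

theorem length_augBlock (i : Fin n) : (A1Block i ++ A2Block G i).length = 33 := by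
  have := length_encL_add_length_encR G i
  simp only [A1Block, A2Block, List.length_append, List.length_cons, List.length_nil]
  grind

theorem genomeX_getElem?_vertex {a r : ℕ} (ha : a < n) (hr : r < 18) :
    (genomeX G)[18 * a + r]? = (vertexBlockX G ⟨a, ha⟩)[r]? := by
  have hV := List.length_flatMap_of_length_eq (l := List.finRange n)
    fun i _ => length_vertexBlockX G i
  rw [genomeX, List.append_assoc, List.getElem?_append_left (by grind),
    List.getElem?_flatMap_of_length_eq (fun i _ => length_vertexBlockX G i) hr]
  simp [ha]

theorem genomeX_getElem?_edge {k r : ℕ} (hk : k < (edgePairs G).length) (hr : r < 5) :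
    (genomeX G)[18 * n + 5 * k + r]? = (edgeBlockX G (edgePairs G)[k])[r]? := by
  have hV := List.length_flatMap_of_length_eq (l := List.finRange n)
    fun i _ => length_vertexBlockX G i
  have hE := List.length_flatMap_of_length_eq (l := edgePairs G)
    fun e _ => length_edgeBlockX G e
  rw [genomeX, List.append_assoc, List.getElem?_append_right (by grind), hV,
    List.length_finRange, List.getElem?_append_left (by grind),
    show 18 * n + 5 * k + r - 18 * n = 5 * k + r by omega,
    List.getElem?_flatMap_of_length_eq (fun e _ => length_edgeBlockX G e) hr]
  simp [hk]

theorem genomeX_getElem?_aug {a r : ℕ} (ha : a < n) (hr : r < 33) :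
    (genomeX G)[18 * n + 5 * (edgePairs G).length + 33 * a + r]? =
      (A1Block ⟨a, ha⟩ ++ A2Block G ⟨a, ha⟩)[r]? := by
  have hV := List.length_flatMap_of_length_eq (l := List.finRange n)
    fun i _ => length_vertexBlockX G i
  have hE := List.length_flatMap_of_length_eq (l := edgePairs G)
    fun e _ => length_edgeBlockX G e
  rw [genomeX, List.getElem?_append_right (by grind), List.length_append, hV, hE,
    List.length_finRange,
    show 18 * n + 5 * (edgePairs G).length + 33 * a + r - (18 * n + 5 * (edgePairs G).length)
      = 33 * a + r by omega,
    List.getElem?_flatMap_of_length_eq (fun i _ => length_augBlock G i) hr]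
  simp [ha]

theorem unmatchedX_edgeBlock {k p : ℕ} (hk : k < (edgePairs G).length)
    (hp₁ : 18 * n + 5 * k < p) (hp₂ : p < 18 * n + 5 * k + 5) : UnmatchedX G p := by
  obtain ⟨r, rfl⟩ : ∃ r, p = 18 * n + 5 * k + r := ⟨p - (18 * n + 5 * k), by omega⟩
  have hr₁ : 1 ≤ r := by omega
  have hr₅ : r < 5 := by omega
  have hV := List.length_flatMap_of_length_eq (l := List.finRange n)
    fun i _ => (by simp : (some (Sym.s i) :: List.replicate 17 none).length = 18)
  have hE := List.length_flatMap_of_length_eq (l := edgePairs G)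
    fun e _ => (by simp : (some (Sym.se e.1 e.2) :: List.replicate 4 none).length = 5)
  rw [UnmatchedX, alignedY, List.append_assoc, List.getElem?_append_right (by grind), hV,
    List.length_finRange, List.getElem?_append_left (by grind),
    show 18 * n + 5 * k + r - 18 * n = 5 * k + r by omega,
    List.getElem?_flatMap_of_length_eq (fun e _ => by simp) hr₅]
  simp only [List.getElem?_eq_getElem hk, Option.bind_some]
  interval_cases r <;> rfl

theorem not_unmatchedX_edgeBoundary (m : ℕ) : ¬ UnmatchedX G (18 * n + 5 * m) := by
  have hV := List.length_flatMap_of_length_eq (l := List.finRange n)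
    fun i _ => (by simp : (some (Sym.s i) :: List.replicate 17 none).length = 18)
  have hE := List.length_flatMap_of_length_eq (l := edgePairs G)
    fun e _ => (by simp : (some (Sym.se e.1 e.2) :: List.replicate 4 none).length = 5)
  rw [UnmatchedX, alignedY, List.append_assoc, List.getElem?_append_right (by grind), hV,
    List.length_finRange, Nat.add_sub_cancel_left, List.getElem?_append]
  split_ifs with hm
  · rw [← Nat.add_zero (5 * m),
      List.getElem?_flatMap_of_length_eq (fun e _ => by simp) (by omega : 0 < 5)]
    simp [List.getElem?_eq_getElem (show m < (edgePairs G).length by grind)]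
  · intro h
    simpa using List.mem_of_getElem? h

theorem vertexBlockX_window {v a b : Fin n} {r : ℕ}
    (h : (vertexBlockX G v)[r]? = some (.e a b 0)) :
    1 ≤ r ∧ r + 2 < 18 ∧ ∀ i p j q, (vertexBlockX G v)[r - 1]? = some (.x i p) →
      (vertexBlockX G v)[r + 2]? ≠ some (.x j q) := by
  have hr : r < 18 := length_vertexBlockX G v ▸ (List.getElem?_eq_some_iff.1 h).1
  unfold vertexBlockX enc encL encR at h ⊢
  split_ifs at h ⊢ <;> simp only [List.cons_append, List.nil_append] at h ⊢ <;>
    interval_cases r <;> simp at h ⊢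

theorem edgeBlockX_eq_e {e : Fin n × Fin n} {a b : Fin n} {r : ℕ}
    (h : (edgeBlockX G e)[r]? = some (.e a b 0)) : r = 2 ∧ e = (a, b) := by
  have hr : r < 5 := length_edgeBlockX G e ▸ (List.getElem?_eq_some_iff.1 h).1
  unfold edgeBlockX at h
  interval_cases r <;> simp_all [Prod.ext_iff]

theorem augBlock_window {v a b : Fin n} {r : ℕ}
    (h : (A1Block v ++ A2Block G v)[r]? = some (.e a b 0)) :
    1 ≤ r ∧ ∀ i p, (A1Block v ++ A2Block G v)[r - 1]? ≠ some (.x i p) := by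
  have hr : r < 33 := length_augBlock G v ▸ (List.getElem?_eq_some_iff.1 h).1
  unfold A1Block A2Block encL encR at h ⊢
  split_ifs at h ⊢ <;> simp only [List.cons_append, List.nil_append] at h ⊢ <;>
    interval_cases r <;> simp at h ⊢

theorem nodup_edgePairs : (edgePairs G).Nodup := by
  rw [edgePairs, List.nodup_flatMap]
  refine ⟨fun i _ => ((List.nodup_finRange n).filter _).map fun _ _ h => by simpa using h, ?_⟩
  refine (List.nodup_finRange n).imp fun hne e he₁ he₂ => ?_
  simp only [List.mem_map] at he₁ he₂
  obtain ⟨_, -, rfl⟩ := he₁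
  obtain ⟨_, -, h⟩ := he₂
  exact hne (congrArg Prod.fst h).symm

theorem eStart_getElem {k : ℕ} (hk : k < (edgePairs G).length) :
    eStart G (edgePairs G)[k] = 18 * n + 5 * k := by
  rw [eStart, (nodup_edgePairs G).idxOf_getElem]

theorem eq_eStart_add_one_of_window {s : ℕ} {a b i j : Fin n} {p q : ℕ}
    (hx₁ : (genomeX G)[s]? = some (.x i p)) (he : (genomeX G)[s + 1]? = some (.e a b 0))
    (hx₂ : (genomeX G)[s + 3]? = some (.x j q)) : s = eStart G (a, b) + 1 := by
  have hlen := (List.getElem?_eq_some_iff.1 he).1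
  simp only [genomeX, List.length_append,
    List.length_flatMap_of_length_eq fun i _ => length_vertexBlockX G i,
    List.length_flatMap_of_length_eq fun e _ => length_edgeBlockX G e,
    List.length_flatMap_of_length_eq fun i _ => length_augBlock G i,
    List.length_finRange] at hlen
  obtain hV | hE | hA : s + 1 < 18 * n ∨
      18 * n ≤ s + 1 ∧ s + 1 < 18 * n + 5 * (edgePairs G).length ∨
      18 * n + 5 * (edgePairs G).length ≤ s + 1 := by omega
  · obtain ⟨v, hv, r, hr, hs⟩ :=
      Nat.exists_eq_add_mul_add_of_lt (Nat.zero_le _) (by omega : s + 1 < 0 + 18 * n)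
    rw [hs, zero_add, genomeX_getElem?_vertex G hv hr] at he
    obtain ⟨hr₁, hr₂, hno⟩ := vertexBlockX_window G he
    refine absurd ?_ (hno i p j q ?_)
    · rwa [← genomeX_getElem?_vertex G hv hr₂, show 18 * v + (r + 2) = s + 3 by omega]
    · rwa [← genomeX_getElem?_vertex G hv (by omega : r - 1 < 18),
        show 18 * v + (r - 1) = s by omega]
  · obtain ⟨k, hk, r, hr, hs⟩ := Nat.exists_eq_add_mul_add_of_lt hE.1 hE.2
    rw [hs, genomeX_getElem?_edge G hk hr] at he
    obtain ⟨rfl, hab⟩ := edgeBlockX_eq_e G he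
    rw [← hab, eStart_getElem G hk]
    omega
  · obtain ⟨v, hv, r, hr, hs⟩ := Nat.exists_eq_add_mul_add_of_lt hA (by omega)
    rw [hs, genomeX_getElem?_aug G hv hr] at he
    obtain ⟨hr₁, hno⟩ := augBlock_window G he
    refine absurd ?_ (hno i p)
    rwa [← genomeX_getElem?_aug G hv (by omega : r - 1 < 33),
      show 18 * n + 5 * (edgePairs G).length + 33 * v + (r - 1) = s by omega]

end Reduction

end MLA

open MLA in
theorem edgeBlock_cost_lower_bound_general {n : ℕ} (G : SimpleGraph (Fin n))
    [DecidableRel G.Adj]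
    (L : Finset Op) (hL : IsLabeling (genomeX G) (UnmatchedX G) L)
    (e : Fin n × Fin n) (he : e ∈ edgePairs G) :
    2 ≤ blockCost L (eStart G e) (eStart G e + 5) := by
  obtain ⟨k, hk, rfl⟩ := List.getElem_of_mem he
  rw [eStart_getElem G hk]
  have hB₅ : 18 * n + 5 * k + 5 = 18 * n + 5 * (k + 1) := by ring
  rcases hL.two_le_blockCost_or_restrict_eq_singleton (by omega)
      (not_unmatchedX_edgeBoundary G k) (hB₅ ▸ not_unmatchedX_edgeBoundary G (k + 1))
      fun p => unmatchedX_edgeBlock G hk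
    with h | ⟨o, hoL, hstart, hend, hsingle⟩
  · exact h
  rw [blockCost, hsingle, cost, Finset.sum_singleton, Op.cost]
  split_ifs with hloss
  · omega
  obtain ⟨s, hs⟩ := Option.ne_none_iff_exists'.1 hloss
  obtain ⟨hne, -, hcopy⟩ := (hL.valid o hoL).2.2 s hs
  have window : ∀ t < 4, (genomeX G)[s + t]? = (edgeBlockX G (edgePairs G)[k])[t + 1]? :=
    fun t ht => by
      rw [hcopy t (by omega), hstart, ← genomeX_getElem?_edge G hk (by omega)]
      ring_nf
  have hs_eq : s = eStart G (edgePairs G)[k] + 1 := eq_eStart_add_one_of_window G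
    (window 0 (by omega)) (window 1 (by omega)) (window 3 (by omega))
  rw [eStart_getElem G hk, ← hstart] at hs_eq
  exact absurd hs_eq hne

open MLA in
/-- For every edge `{v_i, v_j}` of a cubic graph `G` and every
feasible labeling of `(X, Y)`, the total cost of the operations labeling the
four unmatched characters of the block `B_{X-VE}(e_{i,j})` is at least 2. -/
theorem edgeBlock_cost_lower_bound {n : ℕ} (G : SimpleGraph (Fin n))
    [DecidableRel G.Adj] (hcubic : ∀ v : Fin n, G.degree v = 3)
    (L : Finset Op) (hL : IsLabeling (genomeX G) (UnmatchedX G) L)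
    (hfeas : Feasible L) (e : Fin n × Fin n) (he : e ∈ edgePairs G) :
    2 ≤ blockCost L (eStart G e) (eStart G e + 5) :=
  edgeBlock_cost_lower_bound_general G L hL e he
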